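/- Let m ≥ 3. Let 𝔥 ⊂ so(m+1,ℂ) be the subalgebra of skew-symmetric (m+1)×(m+1) complex matrices whose last row and last column vanish (a copy of so(m,ℂ)). Then every complex linear subspace W with 𝔥 ⊆ W ⊆ so(m+1,ℂ) and [A, X] ∈ W for all A ∈ 𝔥 and X ∈ W is equal to 𝔥 or to so(m+1,ℂ). (Equivalently, the quotient so(m+1,ℂ)/so(m,ℂ), with the adjoint action of so(m,ℂ), is an irreducible so(m,ℂ)-module.) -/

import Mathlib

/-!
Write `e o` for the basis vector `Pi.single o 1` and `𝔥` for the skew matrices killing it.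
Every skew `Y` splits as an element of `𝔥` plus `wedge (Y.col o) (e o)`, where
`wedge u v = u vᵀ - v uᵀ`, and `[A, wedge v (e o)] = wedge (A v) (e o)` for `A ∈ 𝔥`. So an
`𝔥`-stable `W ⊇ 𝔥` is determined by the `𝔥`-stable subspace `U = {v | wedge v (e o) ∈ W}`, and it
suffices that `so(n - 1)` acts irreducibly on `e o`'s complement when `n - 1 ≥ 3`: if `v j ≠ 0`,
then for distinct `i, j, k` the element `wedge (e k) (e i) * wedge (e i) (e j)` sends `v` to
`v j • e k`, and `wedge (e l) (e k)` sends `e k` to `e l`.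
-/

open Matrix

namespace Matrix

section Wedge

variable {ι R : Type*} [CommRing R]

def wedge : (ι → R) →ₗ[R] (ι → R) →ₗ[R] Matrix ι ι R :=
  vecMulVecBilin R R - (vecMulVecBilin R R).flip

lemma wedge_apply (u v : ι → R) : wedge u v = vecMulVec u v - vecMulVec v u := rfl

lemma wedge_self (u : ι → R) : wedge u u = 0 := sub_self _

lemma transpose_wedge (u v : ι → R) : (wedge u v)ᵀ = -wedge u v := by
  simp [wedge_apply]

variable [Fintype ι]

lemma wedge_mulVec (u v w : ι → R) : wedge u v *ᵥ w = (v ⬝ᵥ w) • u - (u ⬝ᵥ w) • v := by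
  simp [wedge_apply, sub_mulVec, vecMulVec_mulVec, op_smul_eq_smul]

lemma commutator_wedge {A : Matrix ι ι R} (hA : Aᵀ = -A) (u v : ι → R) :
    A * wedge u v - wedge u v * A = wedge (A *ᵥ u) v + wedge u (A *ᵥ v) := by
  have hvecMul (x : ι → R) : x ᵥ* A = -(A *ᵥ x) := by
    rw [← mulVec_transpose, hA, neg_mulVec]
  simp only [wedge_apply, mul_sub, sub_mul, mul_vecMulVec, vecMulVec_mul, hvecMul, vecMulVec_neg]
  abel

variable [DecidableEq ι]

lemma wedge_single_mulVec (i j : ι) (v : ι → R) :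
    wedge (Pi.single i 1) (Pi.single j 1) *ᵥ v = v j • Pi.single i 1 - v i • Pi.single j 1 := by
  simp [wedge_mulVec, single_dotProduct]

end Wedge

lemma apply_self_eq_zero_of_transpose_eq_neg {ι R : Type*} [Ring R] [NoZeroDivisors R]
    [CharZero R] {A : Matrix ι ι R} (hA : Aᵀ = -A) (i : ι) : A i i = 0 :=
  CharZero.eq_neg_self_iff.1 (congr_fun₂ hA i i)

section Stabilizer

variable {ι R : Type*} [CommRing R]

/-- The paper's `𝔥 ≅ so(n - 1)` inside `so(n)`. -/
def soStabilizer (o : ι) : Set (Matrix ι ι R) :=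
  {A | Aᵀ = -A ∧ ∀ i, A i o = 0 ∧ A o i = 0}

variable [DecidableEq ι] {o : ι}

lemma wedge_single_mem_soStabilizer {i j : ι} (hi : i ≠ o) (hj : j ≠ o) :
    wedge (Pi.single i (1 : R)) (Pi.single j 1) ∈ soStabilizer o := by
  refine ⟨transpose_wedge _ _, fun p => ⟨?_, ?_⟩⟩ <;>
    simp [wedge_apply, vecMulVec_apply, Pi.single_apply, hi.symm, hj.symm]

lemma sub_wedge_col_mem_soStabilizer [NoZeroDivisors R] [CharZero R] {Y : Matrix ι ι R}
    (hY : Yᵀ = -Y) : Y - wedge (Y.col o) (Pi.single o 1) ∈ soStabilizer o := by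
  have hoo := apply_self_eq_zero_of_transpose_eq_neg hY o
  refine ⟨by rw [transpose_sub, hY, transpose_wedge, neg_sub_neg, neg_sub], fun p => ⟨?_, ?_⟩⟩
  · by_cases hp : p = o <;> simp [wedge_apply, vecMulVec_apply, hp, hoo]
  · have hskew : Y o p = -Y p o := congr_fun₂ hY p o
    by_cases hp : p = o <;> simp [wedge_apply, vecMulVec_apply, hp, hoo, hskew]

variable [Fintype ι]

lemma commutator_wedge_single_of_mem_soStabilizer {A : Matrix ι ι R} (hA : A ∈ soStabilizer o)
    (v : ι → R) :
    A * wedge v (Pi.single o 1) - wedge v (Pi.single o 1) * A =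
      wedge (A *ᵥ v) (Pi.single o 1) := by
  have hAo : A *ᵥ Pi.single o 1 = 0 := by
    ext i; simp [(hA.2 i).1]
  rw [commutator_wedge hA.1, hAo, map_zero, add_zero]

end Stabilizer

end Matrix

lemma Fintype.exists_ne_ne_ne {ι : Type*} [Fintype ι] [DecidableEq ι] (h : 3 < Fintype.card ι)
    (a b c : ι) : ∃ x, x ≠ a ∧ x ≠ b ∧ x ≠ c := by
  obtain ⟨x, -, hx⟩ := Finset.exists_mem_notMem_of_card_lt_card (s := {a, b, c})
    (Finset.card_le_three.trans_lt (h.trans_eq Finset.card_univ.symm))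
  exact ⟨x, by simpa [not_or] using hx⟩

section Irreducible

variable {ι K : Type*} [Fintype ι] [DecidableEq ι] [Field K] {o : ι}

theorem single_mem_of_soStabilizer_invariant (hι : 3 < Fintype.card ι) {U : Submodule K (ι → K)}
    (hU : ∀ A ∈ soStabilizer o, ∀ v ∈ U, A *ᵥ v ∈ U) {v : ι → K} (hv : v ∈ U) {j : ι}
    (hj : j ≠ o) (hvj : v j ≠ 0) {l : ι} (hl : l ≠ o) : Pi.single l 1 ∈ U := by
  have hF {i k : ι} (hi : i ≠ o) (hk : k ≠ o) {w : ι → K} (hw : w ∈ U) :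
      w k • Pi.single i 1 - w i • Pi.single k 1 ∈ U :=
    wedge_single_mulVec i k w ▸ hU _ (wedge_single_mem_soStabilizer hi hk) w hw
  obtain ⟨k, hkj, -, hko⟩ := Fintype.exists_ne_ne_ne hι j j o
  obtain ⟨i, hij, hik, hio⟩ := Fintype.exists_ne_ne_ne hι j k o
  have hk : Pi.single k 1 ∈ U := by
    have := hF hko hio (hF hio hj hv)
    simp [hij, hkj, hik.symm] at this
    exact (U.smul_mem_iff hvj).1 this
  rcases eq_or_ne l k with rfl | hlk
  · exact hk
  · simpa [hlk] using hF hl hko hk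

theorem mem_of_soStabilizer_invariant_of_col_ne_zero [CharZero K] (hι : 3 < Fintype.card ι)
    {W : Submodule K (Matrix ι ι K)} (hlow : soStabilizer o ⊆ (W : Set (Matrix ι ι K)))
    (hstable : ∀ A ∈ soStabilizer o, ∀ X ∈ W, A * X - X * A ∈ W)
    {X : Matrix ι ι K} (hX : X ∈ W) (hXskew : Xᵀ = -X) {j : ι} (hXj : X j o ≠ 0)
    {Y : Matrix ι ι K} (hY : Yᵀ = -Y) : Y ∈ W := by
  obtain ⟨U, hmemU⟩ : ∃ U : Submodule K (ι → K), ∀ v, v ∈ U ↔ wedge v (Pi.single o 1) ∈ W :=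
    ⟨W.comap (wedge.flip (Pi.single o 1)), fun _ => Iff.rfl⟩
  have hXU : X.col o ∈ U := by
    simpa [hmemU] using W.sub_mem hX (hlow (sub_wedge_col_mem_soStabilizer hXskew))
  have hUinv : ∀ A ∈ soStabilizer o, ∀ v ∈ U, A *ᵥ v ∈ U := fun A hA v hv => by
    rw [hmemU, ← commutator_wedge_single_of_mem_soStabilizer hA]
    exact hstable A hA _ ((hmemU v).1 hv)
  have hjo : j ≠ o := by
    rintro rfl
    exact hXj (apply_self_eq_zero_of_transpose_eq_neg hXskew j)
  have hU : U = ⊤ := by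
    refine eq_top_iff.2 ((Pi.basisFun K ι).span_eq.symm.le.trans (Submodule.span_le.2 ?_))
    rintro _ ⟨k, rfl⟩
    rcases eq_or_ne k o with rfl | hko
    · simp [hmemU, wedge_self]
    · simpa using single_mem_of_soStabilizer_invariant hι hUinv hXU hjo hXj hko
  have hYU : wedge (Y.col o) (Pi.single o 1) ∈ W := (hmemU _).1 (by simp [hU])
  simpa using W.add_mem (hlow (sub_wedge_col_mem_soStabilizer hY)) hYU

end Irreducible

/-- Let `m ≥ 3`.  Let `𝔥 ⊂ so(m+1, ℂ)` be the subalgebra of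
skew-symmetric `(m+1) × (m+1)` complex matrices whose last row and last column
vanish (a copy of `so(m, ℂ)`).  Then every complex linear subspace `W` with
`𝔥 ⊆ W ⊆ so(m+1, ℂ)` that is stable under the adjoint action of `𝔥`
(`[A, X] = AX − XA ∈ W` for all `A ∈ 𝔥`, `X ∈ W`) equals `𝔥` or `so(m+1, ℂ)`.
(Equivalently, `so(m+1, ℂ)/so(m, ℂ)` with the adjoint action of `so(m, ℂ)` is an
irreducible `so(m, ℂ)`-module.) -/
theorem so_div_so_irreducible
    (m : ℕ) (hm : 3 ≤ m)
    (W : Submodule ℂ (Matrix (Fin (m + 1)) (Fin (m + 1)) ℂ))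
    (hlow : {A : Matrix (Fin (m + 1)) (Fin (m + 1)) ℂ |
        Aᵀ = -A ∧ ∀ i, A i (Fin.last m) = 0 ∧ A (Fin.last m) i = 0} ⊆ (W : Set _))
    (hup : (W : Set _) ⊆ {A : Matrix (Fin (m + 1)) (Fin (m + 1)) ℂ | Aᵀ = -A})
    (hstable : ∀ A : Matrix (Fin (m + 1)) (Fin (m + 1)) ℂ,
        (Aᵀ = -A ∧ ∀ i, A i (Fin.last m) = 0 ∧ A (Fin.last m) i = 0) →
        ∀ X ∈ W, A * X - X * A ∈ W) :
    (W : Set _) = {A : Matrix (Fin (m + 1)) (Fin (m + 1)) ℂ |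
        Aᵀ = -A ∧ ∀ i, A i (Fin.last m) = 0 ∧ A (Fin.last m) i = 0} ∨
    (W : Set _) = {A : Matrix (Fin (m + 1)) (Fin (m + 1)) ℂ | Aᵀ = -A} := by
  have hι : 3 < Fintype.card (Fin (m + 1)) := by simpa using hm
  by_cases hcol : ∀ X ∈ W, ∀ p, X p (Fin.last m) = 0
  · refine Or.inl (Set.Subset.antisymm (fun X hX => ⟨hup hX, fun p => ⟨hcol X hX p, ?_⟩⟩) hlow)
    simpa [hcol X hX p] using congr_fun₂ (hup hX) p (Fin.last m)
  · push Not at hcol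
    obtain ⟨X, hX, j, hXj⟩ := hcol
    exact Or.inr (Set.Subset.antisymm hup fun Y hY =>
      mem_of_soStabilizer_invariant_of_col_ne_zero hι hlow hstable hX (hup hX) hXj hY)
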